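/- arXiv:1202.0401 — 4 statements merged into one kernel-verified Lean document; each statement's English description precedes it below -/
import Mathlib

section
/- The number of n²×n² S-permutation matrices is (n!)^(2n). That is, the number of n²×n² permutation matrices that, when partitioned into n² blocks of size n×n, have exactly one entry equal to 1 in each block, equals (n!)^(2n). -/
/-!
In block `(s, t)` the unique `1` of an S-permutation matrix sits at some local position
`(ρ s t, μ t s)`. Given this block condition, the row condition says exactly that each
`ρ s : Fin n → Fin n` is a bijection, and the column condition that each `μ t` is one.
So S-permutation matrices correspond bijectively to pairs of `n`-tuples of permutations
of `Fin n`, of which there are `(n!)^n · (n!)^n`.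
-/

/-- `A` is an S-permutation matrix: an n²×n² permutation matrix (indexed by
block-index × within-block-index) with exactly one 1 in each of the n² blocks. -/
def SPerm (n : ℕ) (A : Fin n × Fin n → Fin n × Fin n → Bool) : Prop :=
  (∀ i, ∃! j, A i j = true) ∧ (∀ j, ∃! i, A i j = true) ∧
  (∀ s t : Fin n, ∃! p : Fin n × Fin n, A (s, p.1) (t, p.2) = true)

/-- Two binary matrices are disjoint: no common position where both are 1. -/
def MDisj {n : ℕ} (A B : Fin n × Fin n → Fin n × Fin n → Bool) : Prop :=
  ∀ i j, ¬(A i j = true ∧ B i j = true)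

namespace SPerm

variable {n : ℕ}

open Equiv

def ofPerms (ρ μ : Fin n → Perm (Fin n)) : Fin n × Fin n → Fin n × Fin n → Bool :=
  fun p q => decide (ρ p.1 q.1 = p.2 ∧ μ q.1 p.1 = q.2)

@[simp]
lemma ofPerms_apply_eq_true (ρ μ : Fin n → Perm (Fin n)) (s a t j : Fin n) :
    ofPerms ρ μ (s, a) (t, j) = true ↔ ρ s t = a ∧ μ t s = j := by
  simp [ofPerms]

lemma sPerm_ofPerms (ρ μ : Fin n → Perm (Fin n)) : SPerm n (ofPerms ρ μ) := by
  refine ⟨fun ⟨s, a⟩ => ?_, fun ⟨t, j⟩ => ?_, fun s t => ?_⟩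
  · refine ⟨((ρ s).symm a, μ ((ρ s).symm a) s), by simp, ?_⟩
    rintro ⟨t, j⟩ h
    obtain ⟨rfl, rfl⟩ := (ofPerms_apply_eq_true ..).mp h
    simp
  · refine ⟨((μ t).symm j, ρ ((μ t).symm j) t), by simp, ?_⟩
    rintro ⟨s, a⟩ h
    obtain ⟨rfl, rfl⟩ := (ofPerms_apply_eq_true ..).mp h
    simp
  · exact ⟨(ρ s t, μ t s), by simp, fun ⟨a, j⟩ h => by
      obtain ⟨rfl, rfl⟩ := (ofPerms_apply_eq_true ..).mp h
      rfl⟩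

lemma ofPerms_injective :
    Function.Injective fun ρμ : (Fin n → Perm (Fin n)) × (Fin n → Perm (Fin n)) =>
      ofPerms ρμ.1 ρμ.2 := by
  rintro ⟨ρ, μ⟩ ⟨ρ', μ'⟩ h
  dsimp only at h
  have hpos (s t : Fin n) : ρ' s t = ρ s t ∧ μ' t s = μ t s := by
    rw [← ofPerms_apply_eq_true, ← h]
    simp
  exact Prod.ext (funext fun s => Equiv.ext fun t => (hpos s t).1.symm)
    (funext fun t => Equiv.ext fun s => (hpos s t).2.symm)

lemma exists_ofPerms_eq {A : Fin n × Fin n → Fin n × Fin n → Bool} (hA : SPerm n A) :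
    ∃ ρ μ : Fin n → Perm (Fin n), ofPerms ρ μ = A := by
  obtain ⟨hrow, hcol, hblock⟩ := hA
  choose d hd using fun s t => (hblock s t).exists
  have hentry (s a t j : Fin n) : A (s, a) (t, j) = true ↔ d s t = (a, j) :=
    ⟨fun h => (hblock s t).unique (y₂ := (a, j)) (hd s t) h, fun h => by simpa [h] using hd s t⟩
  have hρ (s : Fin n) : Function.Injective fun t => (d s t).1 := by
    intro t t' (htt' : (d s t).1 = (d s t').1)
    have h₁ : A (s, (d s t).1) (t, (d s t).2) = true := hd s t
    have h₂ : A (s, (d s t).1) (t', (d s t').2) = true := htt' ▸ hd s t'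
    exact congrArg Prod.fst ((hrow _).unique h₁ h₂)
  have hμ (t : Fin n) : Function.Injective fun s => (d s t).2 := by
    intro s s' (hss' : (d s t).2 = (d s' t).2)
    have h₁ : A (s, (d s t).1) (t, (d s t).2) = true := hd s t
    have h₂ : A (s', (d s' t).1) (t, (d s t).2) = true := hss' ▸ hd s' t
    exact congrArg Prod.fst ((hcol _).unique h₁ h₂)
  refine ⟨fun s => ofBijective _ (Finite.injective_iff_bijective.mp (hρ s)),
    fun t => ofBijective _ (Finite.injective_iff_bijective.mp (hμ t)), ?_⟩
  ext ⟨s, a⟩ ⟨t, j⟩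
  rw [Bool.eq_iff_iff, ofPerms_apply_eq_true, hentry, Prod.ext_iff]
  rfl

noncomputable def equivPerms :
    (Fin n → Perm (Fin n)) × (Fin n → Perm (Fin n)) ≃ {A // SPerm n A} :=
  ofBijective (fun ρμ => ⟨ofPerms ρμ.1 ρμ.2, sPerm_ofPerms ρμ.1 ρμ.2⟩)
    ⟨fun _ _ h => ofPerms_injective (congrArg Subtype.val h), fun ⟨_, hA⟩ =>
      let ⟨ρ, μ, h⟩ := exists_ofPerms_eq hA
      ⟨(ρ, μ), Subtype.ext h⟩⟩

end SPerm

theorem stmt0_general (n : ℕ) :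
    Nat.card {A : Fin n × Fin n → Fin n × Fin n → Bool // SPerm n A} =
      (Nat.factorial n) ^ (2 * n) := by
  rw [← Nat.card_congr SPerm.equivPerms]
  simp [Nat.card_eq_fintype_card, Fintype.card_perm, two_mul, pow_add]

theorem stmt0 (n : ℕ) (hn : 0 < n) :
    Nat.card {A : Fin n × Fin n → Fin n × Fin n → Bool // SPerm n A} =
      (Nat.factorial n) ^ (2 * n) :=
  stmt0_general n
end

section
/- A matrix P of size n²×n² with entries in {1,...,n²} is a Sudoku matrix if and only if there exist pairwise disjoint S-permutation matrices A_1, ..., A_{n²} such that P = 1·A_1 + 2·A_2 + ... + n²·A_{n²}. -/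
/-- `P` is a Sudoku matrix: every row, column and n×n block contains each
value of `Fin (n*n)` exactly once. -/
def IsSudoku (n : ℕ) (P : Fin n × Fin n → Fin n × Fin n → Fin (n * n)) : Prop :=
  (∀ r, Function.Bijective fun c => P r c) ∧
  (∀ c, Function.Bijective fun r => P r c) ∧
  (∀ s t : Fin n, Function.Bijective fun p : Fin n × Fin n => P (s, p.1) (t, p.2))

/-! The only possible decomposition of `P` is through its level matrices `[P i j = k]`: at each
position pairwise disjoint binary matrices have at most one `1`, and the weight `k + 1 ≥ 1`
read off from `P i j + 1` pins it to `k = P i j`. The level matrices are S-permutation matrices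
exactly when every row, column and block of `P` takes each value once. -/

theorem Fin.eq_iff_of_succ_eq_sum_ite {m : ℕ} {a : Fin m → Bool}
    (hdisj : ∀ k l, k ≠ l → ¬(a k = true ∧ a l = true)) {p : Fin m}
    (hp : (p : ℕ) + 1 = ∑ k, if a k = true then (k : ℕ) + 1 else 0) (k : Fin m) :
    a k = true ↔ p = k := by
  obtain ⟨k₀, hk₀⟩ : ∃ k₀, a k₀ = true := by
    by_contra! hnone
    simp [hnone] at hp
  have hsum : (∑ k, if a k = true then (k : ℕ) + 1 else 0) = k₀ + 1 :=
    (Fintype.sum_eq_single k₀ fun l hl => if_neg fun h => hdisj l k₀ hl ⟨h, hk₀⟩).trans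
      (by simp [hk₀])
  have hp₀ : p = k₀ := Fin.ext (by omega)
  subst hp₀
  exact ⟨fun hk => by_contra fun hne => hdisj p k hne ⟨hk₀, hk⟩, fun h => h ▸ hk₀⟩

variable {n : ℕ}

def levelMatrix (P : Fin n × Fin n → Fin n × Fin n → Fin (n * n)) (k : Fin (n * n)) :
    Fin n × Fin n → Fin n × Fin n → Bool :=
  fun i j => decide (P i j = k)

theorem forall_sPerm_levelMatrix_iff (P : Fin n × Fin n → Fin n × Fin n → Fin (n * n)) :
    (∀ k, SPerm n (levelMatrix P k)) ↔ IsSudoku n P := by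
  simp only [SPerm, IsSudoku, levelMatrix, decide_eq_true_eq,
    Function.bijective_iff_existsUnique, forall_and]
  exact and_congr forall_comm
    (and_congr forall_comm (forall_comm.trans (forall_congr' fun _ => forall_comm)))

theorem mDisj_levelMatrix (P : Fin n × Fin n → Fin n × Fin n → Fin (n * n))
    {k l : Fin (n * n)} (hkl : k ≠ l) : MDisj (levelMatrix P k) (levelMatrix P l) :=
  fun i j ⟨hk, hl⟩ => hkl (by simp_all [levelMatrix])

theorem sum_levelMatrix (P : Fin n × Fin n → Fin n × Fin n → Fin (n * n)) (i j : Fin n × Fin n) :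
    ∑ k, (if levelMatrix P k i j = true then (k : ℕ) + 1 else 0) = (P i j : ℕ) + 1 := by
  simp [levelMatrix, eq_comm (a := P i j)]

theorem eq_levelMatrix_of_sum {P : Fin n × Fin n → Fin n × Fin n → Fin (n * n)}
    {A : Fin (n * n) → (Fin n × Fin n → Fin n × Fin n → Bool)}
    (hdisj : ∀ k l, k ≠ l → MDisj (A k) (A l))
    (hsum : ∀ i j, ((P i j : ℕ) + 1) =
      ∑ k : Fin (n * n), (if A k i j = true then (k : ℕ) + 1 else 0)) :
    A = levelMatrix P := by
  funext k i j
  rw [levelMatrix, Bool.eq_iff_iff, decide_eq_true_eq]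
  exact Fin.eq_iff_of_succ_eq_sum_ite (fun k l hkl => hdisj k l hkl i j) (hsum i j) k

theorem stmt1_general (n : ℕ)
    (P : Fin n × Fin n → Fin n × Fin n → Fin (n * n)) :
    IsSudoku n P ↔
      ∃ A : Fin (n * n) → (Fin n × Fin n → Fin n × Fin n → Bool),
        (∀ k, SPerm n (A k)) ∧
        (∀ k l, k ≠ l → MDisj (A k) (A l)) ∧
        (∀ i j, ((P i j : ℕ) + 1) =
          ∑ k : Fin (n * n), (if A k i j = true then (k : ℕ) + 1 else 0)) := by
  rw [← forall_sPerm_levelMatrix_iff]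
  constructor
  · intro hP
    exact ⟨levelMatrix P, hP, fun k l => mDisj_levelMatrix P,
      fun i j => (sum_levelMatrix P i j).symm⟩
  · rintro ⟨A, hA, hdisj, hsum⟩
    rwa [← eq_levelMatrix_of_sum hdisj hsum]

theorem stmt1 (n : ℕ) (hn : 0 < n)
    (P : Fin n × Fin n → Fin n × Fin n → Fin (n * n)) :
    IsSudoku n P ↔
      ∃ A : Fin (n * n) → (Fin n × Fin n → Fin n × Fin n → Bool),
        (∀ k, SPerm n (A k)) ∧
        (∀ k l, k ≠ l → MDisj (A k) (A l)) ∧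
        (∀ i j, ((P i j : ℕ) + 1) =
          ∑ k : Fin (n * n), (if A k i j = true then (k : ℕ) + 1 else 0)) :=
  stmt1_general n P
end

section
/- The number of sets of 4 pairwise disjoint 4×4 S-permutation matrices (i.e., complete subgraphs of size 4 in the disjointness graph on the 16 S-permutation matrices) is exactly 12. -/
/-!
Writing an S-permutation matrix as the 0/1 matrix of a bijection `f` of `Fin n × Fin n`,
disjointness becomes `∀ i, f i ≠ g i`, and for `n = 2` the count becomes a finite check over the
16 such bijections, done by the kernel. Conceptually: four pairwise disjoint S-permutation
matrices tile the 4×4 grid, so they are the symbol classes of a 4×4 Sudoku; there are 288 Sudokus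
and 4! ways to label the symbols, whence 12.
-/

open Finset Function

theorem Nat.card_pairwise_finset_eq_of_embedding {α ι : Type*} (e : ι ↪ α) {P : α → Prop}
    (hP : ∀ a, P a ↔ a ∈ Set.range e) {R : α → α → Prop} {S : ι → ι → Prop}
    (hRS : ∀ i j, R (e i) (e j) ↔ S i j) (k : ℕ) :
    Nat.card {s : Finset α // s.card = k ∧ (∀ a ∈ s, P a) ∧ ∀ a ∈ s, ∀ b ∈ s, a ≠ b → R a b} =
      Nat.card {u : Finset ι // u.card = k ∧ ∀ i ∈ u, ∀ j ∈ u, i ≠ j → S i j} := by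
  calc _ = Nat.card (map e '' {u | u.card = k ∧ ∀ i ∈ u, ∀ j ∈ u, i ≠ j → S i j}) :=
        Nat.card_congr (Equiv.subtypeEquivRight fun s => ?_)
    _ = _ := Nat.card_image_of_injective (map_injective e) _
  simp only [Set.mem_image]
  constructor
  · rintro ⟨hk, hsP, hsR⟩
    obtain ⟨u, rfl⟩ : ∃ u : Finset ι, u.map e = s := by
      refine ⟨s.preimage e e.injective.injOn, ext fun a => ⟨fun ha => ?_, fun ha => ?_⟩⟩
      · obtain ⟨i, hi, rfl⟩ := mem_map.mp ha
        exact mem_preimage.mp hi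
      · obtain ⟨i, rfl⟩ := (hP a).mp (hsP a ha)
        exact mem_map_of_mem e (mem_preimage.mpr ha)
    refine ⟨u, ⟨(card_map e).symm.trans hk, fun i hi j hj hij => ?_⟩, rfl⟩
    exact (hRS i j).mp (hsR _ (mem_map_of_mem e hi) _ (mem_map_of_mem e hj) (e.injective.ne hij))
  · rintro ⟨u, ⟨hk, huS⟩, rfl⟩
    refine ⟨(card_map e).trans hk, fun a ha => ?_, ?_⟩
    · obtain ⟨i, -, rfl⟩ := mem_map.mp ha
      exact (hP _).mpr ⟨i, rfl⟩
    · simp only [mem_map]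
      rintro _ ⟨i, hi, rfl⟩ _ ⟨j, hj, rfl⟩ hij
      exact (hRS i j).mpr (huS i hi j hj (ne_of_apply_ne e hij))

section GraphMatrix

variable {α β : Type*} [DecidableEq β]

def graphMatrix (f : α → β) : α → β → Bool := fun i j => decide (f i = j)

@[simp]
theorem graphMatrix_eq_true {f : α → β} {i : α} {j : β} : graphMatrix f i j = true ↔ f i = j :=
  decide_eq_true_iff

theorem graphMatrix_injective : Injective (graphMatrix : (α → β) → α → β → Bool) := by
  intro f g h
  funext i
  have : graphMatrix g i (f i) = true := h ▸ graphMatrix_eq_true.mpr rfl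
  exact (graphMatrix_eq_true.mp this).symm

theorem exists_graphMatrix_eq {A : α → β → Bool} (hA : ∀ i, ∃! j, A i j = true) :
    ∃ f, graphMatrix f = A := by
  choose f hf hf_unique using hA
  refine ⟨f, funext fun i => funext fun j => Bool.eq_iff_iff.mpr ?_⟩
  exact graphMatrix_eq_true.trans ⟨fun h => h ▸ hf i, fun h => (hf_unique i j h).symm⟩

end GraphMatrix

/-- The block condition of `SPerm` says that block row `s` meets every block column once. -/
def IsSPerm {n : ℕ} (f : Fin n × Fin n → Fin n × Fin n) : Prop :=
  Bijective f ∧ ∀ s, Bijective fun a => (f (s, a)).1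

instance {n : ℕ} : DecidablePred (IsSPerm (n := n)) := fun _ => instDecidableAnd

section

variable {n : ℕ}

theorem existsUnique_block_iff (f : Fin n × Fin n → Fin n × Fin n) (s t : Fin n) :
    (∃! p : Fin n × Fin n, f (s, p.1) = (t, p.2)) ↔ ∃! a, (f (s, a)).1 = t := by
  constructor
  · rintro ⟨p, hp, hp_unique⟩
    exact ⟨p.1, congrArg Prod.fst hp,
      fun a ha => congrArg Prod.fst (hp_unique (a, (f (s, a)).2) (Prod.ext ha rfl))⟩
  · rintro ⟨a, ha, ha_unique⟩
    refine ⟨(a, (f (s, a)).2), Prod.ext ha rfl, fun p hp => ?_⟩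
    obtain rfl : p.1 = a := ha_unique _ (congrArg Prod.fst hp)
    exact Prod.ext rfl (congrArg Prod.snd hp).symm

theorem sPerm_graphMatrix_iff {f : Fin n × Fin n → Fin n × Fin n} :
    SPerm n (graphMatrix f) ↔ IsSPerm f := by
  simp only [SPerm, IsSPerm, graphMatrix_eq_true, existsUnique_eq', existsUnique_block_iff,
    bijective_iff_existsUnique, implies_true, true_and]

variable (n) in
def sPermEmbedding : {f : Fin n × Fin n → Fin n × Fin n // IsSPerm f} ↪
    (Fin n × Fin n → Fin n × Fin n → Bool) :=
  ⟨fun f => graphMatrix f.1, graphMatrix_injective.comp Subtype.val_injective⟩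

theorem sPerm_iff_mem_range {A : Fin n × Fin n → Fin n × Fin n → Bool} :
    SPerm n A ↔ A ∈ Set.range (sPermEmbedding n) := by
  constructor
  · intro hA
    obtain ⟨f, rfl⟩ := exists_graphMatrix_eq hA.1
    exact ⟨⟨f, sPerm_graphMatrix_iff.mp hA⟩, rfl⟩
  · rintro ⟨f, rfl⟩
    exact sPerm_graphMatrix_iff.mpr f.2

theorem mDisj_graphMatrix_iff {f g : Fin n × Fin n → Fin n × Fin n} :
    MDisj (graphMatrix f) (graphMatrix g) ↔ ∀ i, f i ≠ g i := by
  simp only [MDisj, graphMatrix_eq_true]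
  exact forall_congr' fun i =>
    ⟨fun h hfg => h _ ⟨hfg, rfl⟩, fun h _ ⟨hf, hg⟩ => h (hf.trans hg.symm)⟩

end

theorem card_pairwise_disjoint_isSPerm_quadruples :
    Nat.card {u : Finset {f : Fin 2 × Fin 2 → Fin 2 × Fin 2 // IsSPerm f} //
      u.card = 4 ∧ ∀ f ∈ u, ∀ g ∈ u, f ≠ g → ∀ i, f.1 i ≠ g.1 i} = 12 := by
  rw [Nat.subtype_card {u ∈ powersetCard 4 univ | ∀ f ∈ u, ∀ g ∈ u, f ≠ g → ∀ i, f.1 i ≠ g.1 i}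
    fun u => by simp only [mem_filter, mem_powersetCard, subset_univ, true_and]]
  decide +kernel

theorem stmt18 :
    Nat.card {s : Finset (Fin 2 × Fin 2 → Fin 2 × Fin 2 → Bool) //
      s.card = 4 ∧ (∀ A ∈ s, SPerm 2 A) ∧
      ∀ A ∈ s, ∀ B ∈ s, A ≠ B → MDisj A B} = 12 := by
  rw [Nat.card_pairwise_finset_eq_of_embedding (sPermEmbedding 2) (fun _ => sPerm_iff_mem_range)
    (fun _ _ => mDisj_graphMatrix_iff) 4]
  exact card_pairwise_disjoint_isSPerm_quadruples
end

section
/- If z_n denotes the number of sets of n² pairwise disjoint n²×n² S-permutation matrices and σ_n the number of n²×n² Sudoku matrices, then σ_n = (n²)! · z_n. -/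
open Finset Function
open scoped Nat

section Labelling

variable {α : Type*} [DecidableEq α] {N : ℕ}

theorem Finset.image_univ_coe_equiv {s : Finset α} (e : Fin N ≃ s) :
    univ.image (fun v => (e v : α)) = s := by
  ext a
  simp only [mem_image, mem_univ, true_and]
  exact ⟨fun ⟨v, hv⟩ => hv ▸ (e v).2, fun ha => ⟨e.symm ⟨a, ha⟩, by simp⟩⟩

noncomputable def injectiveImageEqEquiv (s : Finset α) :
    {f : Fin N → α // Injective f ∧ univ.image f = s} ≃ (Fin N ≃ s) where
  toFun f := Equiv.ofBijective (fun v => ⟨f.1 v, f.2.2.subset (mem_image_of_mem _ (mem_univ v))⟩)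
    ⟨fun v w h => f.2.1 (congrArg Subtype.val h), fun a => by
      obtain ⟨v, -, hv⟩ := mem_image.1 (f.2.2.symm ▸ a.2 : (a : α) ∈ univ.image f.1)
      exact ⟨v, Subtype.ext hv⟩⟩
  invFun e := ⟨fun v => e v, Subtype.val_injective.comp e.injective, image_univ_coe_equiv e⟩
  left_inv _ := rfl
  right_inv _ := Equiv.ext fun _ => rfl

theorem card_injective_image_eq {s : Finset α} (hs : s.card = N) :
    Nat.card {f : Fin N → α // Injective f ∧ univ.image f = s} = N ! := by
  rw [Nat.card_congr (injectiveImageEqEquiv s), Nat.card_eq_fintype_card,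
    Fintype.card_equiv (s.equivFinOfCardEq hs).symm, Fintype.card_fin]

variable [Fintype α]

theorem card_injective_image_pred (S : Finset α → Prop) :
    Nat.card {f : Fin N → α // Injective f ∧ S (univ.image f)} =
      N ! * Nat.card {s : Finset α // s.card = N ∧ S s} := by
  classical
  let image : {f : Fin N → α // Injective f ∧ S (univ.image f)} →
      {s : Finset α // s.card = N ∧ S s} := fun f =>
    ⟨univ.image f.1, by rw [card_image_of_injective _ f.2.1, Finset.card_fin], f.2.2⟩
  have fiber (s : {s : Finset α // s.card = N ∧ S s}) :
      {f // image f = s} ≃ {f : Fin N → α // Injective f ∧ univ.image f = s} :=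
    (Equiv.subtypeEquivRight fun _ => Subtype.ext_iff).trans <|
      (Equiv.subtypeSubtypeEquivSubtypeInter _ (fun f => univ.image f = s.1)).trans <|
        Equiv.subtypeEquivRight fun f =>
          ⟨fun h => ⟨h.1.1, h.2⟩, fun h => ⟨⟨h.1, h.2 ▸ s.2.2⟩, h.2⟩⟩
  have card_fiber (s) : Nat.card {f // image f = s} = N ! :=
    (Nat.card_congr (fiber s)).trans (card_injective_image_eq s.2.1)
  rw [← Nat.card_congr (Equiv.sigmaFiberEquiv image), Nat.card_sigma]
  simp only [card_fiber, sum_const, Finset.card_univ, smul_eq_mul, Nat.card_eq_fintype_card,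
    mul_comm]

end Labelling

noncomputable def equivFiberIndicators {ι κ β : Type*} [DecidableEq β] :
    (ι → κ → β) ≃ {f : β → ι → κ → Bool // ∀ i j, ∃! b, f b i j = true} where
  toFun P := ⟨fun b i j => decide (P i j = b), fun i j => ⟨P i j, by simp, by simp [eq_comm]⟩⟩
  invFun f i j := (f.2 i j).exists.choose
  left_inv P := funext₂ fun i j =>
    Eq.symm <| of_decide_eq_true <| Exists.choose_spec (p := fun b => decide (P i j = b) = true) _
  right_inv f := Subtype.ext <| funext₃ fun b i j => by
    have hc := (f.2 i j).exists.choose_spec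
    rw [Bool.eq_iff_iff, decide_eq_true_iff]
    exact ⟨fun h => h ▸ hc, fun hb => (f.2 i j).unique hc hb⟩

theorem forall_existsUnique_iff_pairwise_disjoint {ι κ β : Type*} [Fintype β] [Fintype κ]
    (hcard : Fintype.card β = Fintype.card κ) {f : β → ι → κ → Bool}
    (hrow : ∀ b i, ∃! j, f b i j = true) :
    (∀ i j, ∃! b, f b i j = true) ↔ ∀ b c, b ≠ c → ∀ i j, ¬(f b i j = true ∧ f c i j = true) := by
  constructor
  · rintro h b c hbc i j ⟨hb, hc⟩
    exact hbc ((h i j).unique hb hc)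
  · intro hdisj i j
    choose col hcol using hrow
    have hinj : Injective (col · i) := fun b c (h : col b i = col c i) => by
      by_contra hbc
      exact hdisj b c hbc i (col b i) ⟨(hcol b i).1, h ▸ (hcol c i).1⟩
    obtain ⟨b, rfl⟩ := ((Fintype.bijective_iff_injective_and_card _).2 ⟨hinj, hcard⟩).2 j
    refine ⟨b, (hcol b i).1, fun c hc => ?_⟩
    by_contra hcb
    exact hdisj c b hcb i _ ⟨hc, (hcol b i).1⟩

theorem isSudoku_iff_forall_sPerm {n : ℕ} (P : Fin n × Fin n → Fin n × Fin n → Fin (n * n)) :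
    IsSudoku n P ↔ ∀ v, SPerm n fun i j => decide (P i j = v) := by
  simp only [IsSudoku, SPerm, bijective_iff_existsUnique, decide_eq_true_eq, forall_and]
  exact ⟨fun ⟨h₁, h₂, h₃⟩ => ⟨fun v i => h₁ i v, fun v j => h₂ j v, fun v s t => h₃ s t v⟩,
    fun ⟨h₁, h₂, h₃⟩ => ⟨fun i v => h₁ v i, fun j v => h₂ v j, fun s t v => h₃ v s t⟩⟩

abbrev BoolMatrix (n : ℕ) := Fin n × Fin n → Fin n × Fin n → Bool

def PairwiseDisjointSPerms (n : ℕ) (s : Finset (BoolMatrix n)) : Prop :=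
  (∀ A ∈ s, SPerm n A) ∧ ∀ A ∈ s, ∀ B ∈ s, A ≠ B → MDisj A B

theorem SPerm.not_mDisj_self {n : ℕ} (hn : 0 < n) {A : BoolMatrix n} (hA : SPerm n A) :
    ¬MDisj A A := fun hAA =>
  let ⟨j, hj, _⟩ := hA.1 (⟨0, hn⟩, ⟨0, hn⟩)
  hAA _ j ⟨hj, hj⟩

theorem injective_of_sPerm_of_mDisj {n : ℕ} {f : Fin (n * n) → BoolMatrix n}
    (hS : ∀ v, SPerm n (f v)) (hD : ∀ v w, v ≠ w → MDisj (f v) (f w)) : Injective f := by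
  intro v w hvw
  by_contra hne
  have hn : 0 < n := Nat.pos_of_mul_pos_left v.pos
  exact (hS w).not_mDisj_self hn (hvw ▸ hD v w hne)

theorem pairwiseDisjointSPerms_image_iff {ι : Type*} [Fintype ι] {n : ℕ}
    {f : ι → BoolMatrix n} (hf : Injective f) :
    PairwiseDisjointSPerms n (univ.image f) ↔
      (∀ v, SPerm n (f v)) ∧ ∀ v w, v ≠ w → MDisj (f v) (f w) := by
  simp only [PairwiseDisjointSPerms, forall_mem_image, mem_univ, true_implies, hf.ne_iff]

theorem existsUnique_and_sPerm_iff {n : ℕ} (f : Fin (n * n) → BoolMatrix n) :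
    ((∀ i j, ∃! v, f v i j = true) ∧ ∀ v, SPerm n (f v)) ↔
      Injective f ∧ PairwiseDisjointSPerms n (univ.image f) := by
  have hcover := forall_existsUnique_iff_pairwise_disjoint (f := f) (by simp)
  constructor
  · rintro ⟨hf, hS⟩
    have hD := (hcover fun v => (hS v).1).1 hf
    have hinj := injective_of_sPerm_of_mDisj hS hD
    exact ⟨hinj, (pairwiseDisjointSPerms_image_iff hinj).2 ⟨hS, hD⟩⟩
  · rintro ⟨hinj, hP⟩
    obtain ⟨hS, hD⟩ := (pairwiseDisjointSPerms_image_iff hinj).1 hP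
    exact ⟨(hcover fun v => (hS v).1).2 hD, hS⟩

noncomputable def sudokuEquiv (n : ℕ) :
    {P // IsSudoku n P} ≃
      {f : Fin (n * n) → BoolMatrix n // Injective f ∧ PairwiseDisjointSPerms n (univ.image f)} :=
  (equivFiberIndicators.subtypeEquiv (q := fun f => ∀ v, SPerm n (f.1 v))
    isSudoku_iff_forall_sPerm).trans <|
  (Equiv.subtypeSubtypeEquivSubtypeInter _ _).trans <|
  Equiv.subtypeEquivRight existsUnique_and_sPerm_iff

theorem stmt19_general (n : ℕ) :
    Nat.card {P : Fin n × Fin n → Fin n × Fin n → Fin (n * n) // IsSudoku n P} =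
      Nat.factorial (n * n) *
        Nat.card {s : Finset (Fin n × Fin n → Fin n × Fin n → Bool) //
          s.card = n * n ∧ (∀ A ∈ s, SPerm n A) ∧
          ∀ A ∈ s, ∀ B ∈ s, A ≠ B → MDisj A B} :=
  (Nat.card_congr (sudokuEquiv n)).trans (card_injective_image_pred _)

theorem stmt19 (n : ℕ) (hn : 2 ≤ n) :
    Nat.card {P : Fin n × Fin n → Fin n × Fin n → Fin (n * n) // IsSudoku n P} =
      Nat.factorial (n * n) *
        Nat.card {s : Finset (Fin n × Fin n → Fin n × Fin n → Bool) //
          s.card = n * n ∧ (∀ A ∈ s, SPerm n A) ∧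
          ∀ A ∈ s, ∀ B ∈ s, A ≠ B → MDisj A B} :=
  stmt19_general n
end
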